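/- Let f, g : (ℝ^n,0) → (ℝ,0) be germs of C^∞ functions and φ : (ℝ^n,0) → (ℝ^n,0) a germ of C^1 diffeomorphism with f = g∘φ. If f has finite order m = ord_0 f, then g also has order m at 0 and in(f) = in(g) ∘ D_0φ, where D_0φ is the (invertible linear) derivative of φ at 0. In particular, μ(in(f)) < +∞ if and only if μ(in(g)) < +∞. -/

import Mathlib

open Filter Set Metric Topology Asymptotics

noncomputable section

set_option synthInstance.maxHeartbeats 1000000

/-- `ℝ^n` with the Euclidean structure. -/
abbrev Eucl (n : ℕ) : Type := EuclideanSpace ℝ (Fin n)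

variable {V W : Type*} [NormedAddCommGroup V] [NormedSpace ℝ V]
  [NormedAddCommGroup W] [NormedSpace ℝ W]

/-- `F` admits the `α`-derivative `H` at `x`:  `H` is continuous and for every direction `v`,
`F (x + t v) - F x = t ^ α • H v + o(t ^ α)` as `t → 0⁺`. -/
def HasAlphaDerivAt (F : V → W) (x : V) (α : ℝ) (H : V → W) : Prop :=
  Continuous H ∧ ∀ v : V,
    Tendsto (fun t : ℝ => (t ^ α)⁻¹ • (F (x + t • v) - F x - t ^ α • H v))
      (𝓝[>] (0 : ℝ)) (𝓝 0)

/-- `F` has order `α` at `x`: for every nonzero direction `v` the limit of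
`F (x + t v) / t ^ α` as `t → 0⁺` exists, and for at least one `v` it is nonzero. -/
def HasOrderAt (F : V → W) (x : V) (α : ℝ) : Prop :=
  (∀ v : V, v ≠ 0 → ∃ L : W,
      Tendsto (fun t : ℝ => (t ^ α)⁻¹ • F (x + t • v)) (𝓝[>] (0 : ℝ)) (𝓝 L)) ∧
  ∃ v : V, v ≠ 0 ∧ ∃ L : W, L ≠ 0 ∧
      Tendsto (fun t : ℝ => (t ^ α)⁻¹ • F (x + t • v)) (𝓝[>] (0 : ℝ)) (𝓝 L)

/-- `φ` is a lipeomorphism from `U` onto `V'`. -/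
def IsLipeoOn (φ : V → W) (U : Set V) (V' : Set W) : Prop :=
  Set.BijOn φ U V' ∧ ∃ c : ℝ, 1 ≤ c ∧ ∀ x ∈ U, ∀ y ∈ U,
    (1 / c) * ‖x - y‖ ≤ ‖φ x - φ y‖ ∧ ‖φ x - φ y‖ ≤ c * ‖x - y‖

/-- `d` is a pseudo-Lipschitz derivative of `φ` at `x`: along some sequence `t_j → 0⁺`,
`(φ (x + t_j v) - φ x) / t_j → d v` uniformly on compact sets. -/
def IsPseudoLipDerivAt (φ : V → V) (x : V) (d : V → V) : Prop :=
  ∃ t : ℕ → ℝ, (∀ j, 0 < t j) ∧ Tendsto t atTop (𝓝 (0 : ℝ)) ∧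
    ∀ K : Set V, IsCompact K →
      TendstoUniformlyOn (fun j v => (t j)⁻¹ • (φ (x + t j • v) - φ x)) d atTop K

/-- `F ∼ G` at `x₀`: asymptotic equivalence of `F` and `G` at `x₀`. -/
def AsympEquivAt (F G : V → W) (x₀ : V) : Prop :=
  ∃ c₁ c₂ : ℝ, 0 < c₁ ∧ 0 < c₂ ∧
    ∀ᶠ x in 𝓝 x₀, c₂ * ‖F x‖ ≤ ‖G x‖ ∧ ‖G x‖ ≤ c₁ * ‖F x‖

/-- `F ≈ G` at `x₀` via the lipeomorphism `φ`. -/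
def AsympLipEquivAtVia {V' : Type*} [NormedAddCommGroup V'] [NormedSpace ℝ V']
    (F : V → W) (G : V' → W) (φ : V → V') (x₀ : V) : Prop :=
  ∃ c : ℝ, 1 ≤ c ∧ ∀ᶠ x in 𝓝 x₀,
    (1 / c) * ‖F x - F x₀‖ ≤ ‖G (φ x) - G (φ x₀)‖ ∧
      ‖G (φ x) - G (φ x₀)‖ ≤ c * ‖F x - F x₀‖

/-- The degree-`m` term of the Taylor series of `F` at `0`; for a `C^∞` germ of
finite order `m` this is its initial part `in(F)`. -/
def inPart (F : V → ℝ) (m : ℕ) : V → ℝ :=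
  fun x => (m.factorial : ℝ)⁻¹ • iteratedFDeriv ℝ m F 0 (fun _ => x)

instance {α : Type*} (l : Filter α) {R : Type*} [CommSemiring R] :
    Algebra R (Filter.Germ l R) :=
  Algebra.ofModule
    (fun r x y => Filter.Germ.inductionOn₂ x y fun f g => by
      rw [← Filter.Germ.coe_smul, ← Filter.Germ.coe_mul, ← Filter.Germ.coe_mul,
        ← Filter.Germ.coe_smul, smul_mul_assoc])
    (fun r x y => Filter.Germ.inductionOn₂ x y fun f g => by
      rw [← Filter.Germ.coe_smul, ← Filter.Germ.coe_mul, ← Filter.Germ.coe_mul,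
        ← Filter.Germ.coe_smul, mul_smul_comm])

/-- `E_n`: the ℝ-algebra of germs at `0` of `C^∞` functions `ℝ^n → ℝ`, realized as a
subalgebra of the algebra of germs at `0` of functions `ℝ^n → ℝ`. -/
def smoothGerms (n : ℕ) : Subalgebra ℝ (Filter.Germ (𝓝 (0 : Eucl n)) ℝ) where
  carrier := {γ | ∃ f : Eucl n → ℝ, ContDiff ℝ (⊤ : ℕ∞) f ∧ γ = ↑f}
  add_mem' := by
    rintro a b ⟨f, hf, rfl⟩ ⟨g, hg, rfl⟩
    exact ⟨f + g, hf.add hg, rfl⟩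
  mul_mem' := by
    rintro a b ⟨f, hf, rfl⟩ ⟨g, hg, rfl⟩
    exact ⟨f * g, hf.mul hg, rfl⟩
  algebraMap_mem' := fun r => ⟨fun _ => r, contDiff_const, by
    rw [Algebra.algebraMap_eq_smul_one, ← Filter.Germ.coe_one, ← Filter.Germ.coe_smul]
    congr 1
    funext x
    simp⟩

/-- The Jacobian ideal `J(f) ⊆ E_n`, generated by the germs at `0` of the partial
derivatives `∂f/∂x_1, …, ∂f/∂x_n`. -/
def jacobianIdeal (n : ℕ) (f : Eucl n → ℝ) : Ideal (smoothGerms n) :=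
  Ideal.span {γ | ∃ i : Fin n,
    (γ : Filter.Germ (𝓝 (0 : Eucl n)) ℝ) =
      ↑(fun x => fderiv ℝ f x (EuclideanSpace.single i 1))}

/-- The real Milnor number `μ(f) = dim_ℝ E_n / J(f)`, as a cardinal. -/
def milnor (n : ℕ) (f : Eucl n → ℝ) : Cardinal :=
  Module.rank ℝ (smoothGerms n ⧸ jacobianIdeal n f)

/-- `φ` is a germ at `0` of a `C^k` diffeomorphism `(ℝ^n, 0) → (ℝ^n, 0)`. -/
def IsCkDiffeoGermAt {n : ℕ} (k : ℕ∞) (φ : Eucl n → Eucl n) : Prop :=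
  φ 0 = 0 ∧ ∃ U V : Set (Eucl n), IsOpen U ∧ IsOpen V ∧ 0 ∈ U ∧ 0 ∈ V ∧
    Set.BijOn φ U V ∧ ContDiffOn ℝ k φ U ∧ ∃ ψ : Eucl n → Eucl n,
      ContDiffOn ℝ k ψ V ∧ (∀ x ∈ U, ψ (φ x) = x) ∧ ∀ y ∈ V, φ (ψ y) = y


-- ### Auxiliary development -------------------------------------------------

section Aux

lemma inPart_contDiff {V : Type*} [NormedAddCommGroup V] [NormedSpace ℝ V]
    (F : V → ℝ) (m : ℕ) : ContDiff ℝ (⊤ : ℕ∞) (inPart F m) := by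
  have h1 : ContDiff ℝ (⊤ : ℕ∞) fun x : V => iteratedFDeriv ℝ m F 0 (fun _ : Fin m => x) := by
    have := (iteratedFDeriv ℝ m F 0).contDiff (n := (⊤ : ℕ∞))
    exact this.comp (ContinuousLinearMap.pi fun _ : Fin m => ContinuousLinearMap.id ℝ V).contDiff
  exact h1.const_smul _

lemma inPart_smul {V : Type*} [NormedAddCommGroup V] [NormedSpace ℝ V]
    (F : V → ℝ) (m : ℕ) (t : ℝ) (x : V) :
    inPart F m (t • x) = t ^ m * inPart F m x := by
  unfold inPart
  have : (fun _ : Fin m => t • x) = fun i : Fin m => t • (fun _ : Fin m => x) i := rfl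
  rw [this, ContinuousMultilinearMap.map_smul_univ]
  simp [smul_eq_mul]
  ring

lemma peano {n m : ℕ} (F : Eucl n → ℝ) (hF : ContDiff ℝ (⊤ : ℕ∞) F) :
    ∃ C : ℝ, 0 ≤ C ∧ ∀ x : Eucl n, ‖x‖ ≤ 1 →
      |F x - ∑ j ∈ Finset.range (m + 1), inPart F j x| ≤ C * ‖x‖ ^ (m + 1) := by
  obtain ⟨C₀, hC₀⟩ := (isCompact_closedBall (0 : Eucl n) 1).exists_bound_of_continuousOn
    ((hF.continuous_iteratedFDeriv (n := (⊤ : ℕ∞)) (m := m + 1) (by exact_mod_cast le_top)).continuousOn)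
  set C₁ := max C₀ 0 with hC₁def
  have hC₁ : 0 ≤ C₁ := le_max_right _ _
  refine ⟨C₁ / m.factorial, by positivity, fun x hx => ?_⟩
  set L : ℝ →L[ℝ] Eucl n := ContinuousLinearMap.toSpanSingleton ℝ x with hL
  set h : ℝ → ℝ := F ∘ L with hh
  have hhC : ContDiff ℝ ((m + 1 : ℕ) : ℕ∞) h := (hF.of_le (by exact_mod_cast le_top)).comp L.contDiff
  have hD : ∀ k : ℕ, k ≤ m + 1 → ∀ y ∈ Icc (0:ℝ) 1,
      iteratedDerivWithin k h (Icc (0:ℝ) 1) y = iteratedFDeriv ℝ k F (y • x) (fun _ => x) := by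
    intro k hk y hy
    have h1 : iteratedFDerivWithin ℝ k h (Icc (0:ℝ) 1) y = iteratedFDeriv ℝ k h y := by
      have := ((contDiff_iff_ftaylorSeries (n := (m+1 : ℕ))).mp
        hhC).hasFTaylorSeriesUpToOn (Icc (0:ℝ) 1)
      exact (this.eq_iteratedFDerivWithin_of_uniqueDiffOn (by exact_mod_cast hk)
        (uniqueDiffOn_Icc one_pos) hy).symm
    have h2 : iteratedFDeriv ℝ k h y =
        (iteratedFDeriv ℝ k F (L y)).compContinuousLinearMap fun _ => L :=
      L.iteratedFDeriv_comp_right (n := ((⊤ : ℕ∞) : WithTop ℕ∞)) (hF.of_le ((by exact_mod_cast le_top))) y (by exact_mod_cast le_top)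
    rw [iteratedDerivWithin_eq_iteratedFDerivWithin, h1, h2]
    simp [hL, ContinuousLinearMap.toSpanSingleton_apply]
  have hbound : ∀ y ∈ Icc (0:ℝ) 1,
      ‖iteratedDerivWithin (m + 1) h (Icc (0:ℝ) 1) y‖ ≤ C₁ * ‖x‖ ^ (m + 1) := by
    intro y hy
    rw [hD (m + 1) le_rfl y hy]
    calc ‖iteratedFDeriv ℝ (m+1) F (y • x) (fun _ => x)‖
        ≤ ‖iteratedFDeriv ℝ (m+1) F (y • x)‖ * ∏ _i : Fin (m+1), ‖x‖ :=
          (iteratedFDeriv ℝ (m+1) F (y • x)).le_opNorm _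
      _ ≤ C₁ * ‖x‖ ^ (m + 1) := by
          rw [Finset.prod_const, Finset.card_univ, Fintype.card_fin]
          have hmem : y • x ∈ closedBall (0 : Eucl n) 1 := by
            rw [mem_closedBall_zero_iff, norm_smul]
            calc ‖y‖ * ‖x‖ ≤ 1 * 1 := by
                  apply mul_le_mul _ hx (norm_nonneg _) zero_le_one
                  rw [Real.norm_eq_abs, abs_le]; exact ⟨by linarith [hy.1], hy.2⟩
              _ = 1 := by ring
          exact mul_le_mul (le_trans (hC₀ _ hmem) (le_max_left _ _))
            le_rfl (by positivity) hC₁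
  have := taylor_mean_remainder_bound (f := h) (a := 0) (b := 1) (x := 1) (n := m)
    zero_le_one (hhC.contDiffOn) (by norm_num) hbound
  have hT : taylorWithinEval h m (Icc (0:ℝ) 1) 0 1 = ∑ j ∈ Finset.range (m + 1), inPart F j x := by
    rw [taylor_within_apply]
    apply Finset.sum_congr rfl
    intro k hk
    rw [Finset.mem_range] at hk
    rw [hD k (by omega) 0 (by norm_num)]
    simp [inPart, smul_eq_mul]
  have hone : h 1 = F x := by simp [hh, hL, ContinuousLinearMap.toSpanSingleton_apply]
  rw [hT, hone] at this
  calc |F x - ∑ j ∈ Finset.range (m + 1), inPart F j x| ≤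
      C₁ * ‖x‖ ^ (m + 1) * (1 - 0) ^ (m + 1) / m.factorial := by
        simpa [Real.norm_eq_abs] using this
    _ = C₁ / m.factorial * ‖x‖ ^ (m + 1) := by ring

lemma key {n m k : ℕ} {F : Eucl n → ℝ} (hF : ContDiff ℝ (⊤ : ℕ∞) F)
    {c : ℝ → Eucl n} {w : Eucl n}
    (hc : Tendsto (fun t => t⁻¹ • c t) (𝓝[>] (0:ℝ)) (𝓝 w))
    (hk : k ≤ m)
    (hvan : ∀ j, j < k → ∀ y : Eucl n, inPart F j y = 0) :
    Tendsto (fun t => t ^ (m - k) * ((t ^ m)⁻¹ * F (c t))) (𝓝[>] (0:ℝ))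
      (𝓝 (inPart F k w)) := by
  obtain ⟨C, hC0, hC⟩ := peano (m := m) F hF
  set l := 𝓝[>] (0:ℝ)
  set u : ℝ → Eucl n := fun t => t⁻¹ • c t with hu
  set K := ‖w‖ + 1 with hK
  have hKpos : 0 < K := by positivity
  have h1 : ∀ᶠ t in l, 0 < t := self_mem_nhdsWithin
  have h2 : ∀ᶠ t in l, ‖u t‖ ≤ K := by
    filter_upwards [hc (Metric.ball_mem_nhds w one_pos)] with t ht
    have : dist (u t) w < 1 := ht
    calc ‖u t‖ ≤ ‖w‖ + dist (u t) w := by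
          rw [dist_eq_norm]
          linarith [norm_sub_norm_le (u t) w]
      _ ≤ K := by rw [hK]; linarith
  have h3 : ∀ᶠ t in l, t < 1 / K := by
    have : ∀ᶠ t in 𝓝 (0:ℝ), t < 1 / K :=
      Filter.Tendsto.eventually_lt_const (by positivity) tendsto_id
    exact this.filter_mono nhdsWithin_le_nhds
  have hcu : ∀ᶠ t in l, c t = t • u t := by
    filter_upwards [h1] with t ht
    rw [hu]; simp [smul_smul, mul_inv_cancel₀ (ne_of_gt ht)]
  have hcnorm : ∀ᶠ t in l, ‖c t‖ ≤ t * K := by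
    filter_upwards [h1, h2, hcu] with t ht1 ht2 ht3
    rw [ht3, norm_smul, Real.norm_eq_abs, abs_of_pos ht1]
    exact mul_le_mul_of_nonneg_left ht2 (le_of_lt ht1)
  have hcsmall : ∀ᶠ t in l, ‖c t‖ ≤ 1 := by
    filter_upwards [h1, h3, hcnorm] with t ht1 ht3 htn
    calc ‖c t‖ ≤ t * K := htn
      _ ≤ (1/K) * K := mul_le_mul_of_nonneg_right (le_of_lt ht3) (le_of_lt hKpos)
      _ = 1 := by field_simp
  set E : ℝ → ℝ := fun t =>
    (t ^ m)⁻¹ * (F (c t) - ∑ j ∈ Finset.range (m + 1), inPart F j (c t)) with hE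
  have hEten : Tendsto E l (𝓝 0) := by
    refine squeeze_zero_norm' (a := fun t => (C * K ^ (m+1)) * t) ?_ ?_
    · filter_upwards [h1, hcnorm, hcsmall] with t ht1 htn hts
      rw [hE]
      have htm : (0:ℝ) < t ^ m := pow_pos ht1 m
      rw [Real.norm_eq_abs, abs_mul, abs_inv, abs_of_pos htm]
      have hb := hC (c t) hts
      calc (t ^ m)⁻¹ * |F (c t) - ∑ j ∈ Finset.range (m + 1), inPart F j (c t)|
          ≤ (t ^ m)⁻¹ * (C * ‖c t‖ ^ (m+1)) := by
            apply mul_le_mul_of_nonneg_left hb (le_of_lt (inv_pos.mpr htm))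
        _ ≤ (t ^ m)⁻¹ * (C * (t * K) ^ (m+1)) := by
            apply mul_le_mul_of_nonneg_left _ (le_of_lt (inv_pos.mpr htm))
            apply mul_le_mul_of_nonneg_left _ hC0
            exact pow_le_pow_left₀ (norm_nonneg _) htn _
        _ = (C * K ^ (m+1)) * t := by
            rw [mul_pow, pow_succ t m]
            field_simp
    · have : Tendsto (fun t : ℝ => (C * K ^ (m+1)) * t) (𝓝 0) (𝓝 ((C * K ^ (m+1)) * 0)) :=
        (continuous_const.mul continuous_id).tendsto 0
      simpa using this.mono_left nhdsWithin_le_nhds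
  have hiden : ∀ᶠ t in l,
      t ^ (m - k) * ((t ^ m)⁻¹ * F (c t)) =
        t ^ (m - k) * E t + ∑ j ∈ Finset.Ico k (m + 1), t ^ (j - k) * inPart F j (u t) := by
    filter_upwards [h1, hcu] with t ht1 htc
    have htne : (t:ℝ) ≠ 0 := ne_of_gt ht1
    have hsum : ∑ j ∈ Finset.range (m + 1), inPart F j (c t)
        = ∑ j ∈ Finset.Ico k (m + 1), t ^ j * inPart F j (u t) := by
      have step1 : ∑ j ∈ Finset.range (m + 1), inPart F j (c t)
          = ∑ j ∈ Finset.range (m + 1), t ^ j * inPart F j (u t) := by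
        apply Finset.sum_congr rfl
        intro j _
        rw [htc, inPart_smul]
      rw [step1, Finset.range_eq_Ico]
      refine (Finset.sum_subset (Finset.Ico_subset_Ico_left (Nat.zero_le k)) ?_).symm
      intro j hj hnj
      simp only [Finset.mem_Ico] at hj hnj
      have : j < k := by omega
      rw [hvan j this]
      ring
    have hexp : ∀ j, k ≤ j → t ^ (m - k) * ((t ^ m)⁻¹ * t ^ j) = t ^ (j - k) := by
      intro j hj
      have htm : (t:ℝ)^m ≠ 0 := by positivity
      field_simp
      rw [← pow_add, ← pow_add]
      congr 1
      omega
    have : F (c t) = (F (c t) - ∑ j ∈ Finset.range (m + 1), inPart F j (c t))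
        + ∑ j ∈ Finset.Ico k (m + 1), t ^ j * inPart F j (u t) := by
      rw [← hsum]; ring
    rw [this]
    rw [mul_add, mul_add, Finset.mul_sum, Finset.mul_sum]
    congr 1
    apply Finset.sum_congr rfl
    intro j hj
    rw [Finset.mem_Ico] at hj
    have := hexp j hj.1
    calc t ^ (m-k) * ((t^m)⁻¹ * (t ^ j * inPart F j (u t)))
        = (t ^ (m-k) * ((t^m)⁻¹ * t ^ j)) * inPart F j (u t) := by ring
      _ = t ^ (j - k) * inPart F j (u t) := by rw [this]
  have hR : Tendsto (fun t => t ^ (m - k) * E t +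
      ∑ j ∈ Finset.Ico k (m + 1), t ^ (j - k) * inPart F j (u t)) l
      (𝓝 (inPart F k w)) := by
    have hterm : ∀ j ∈ Finset.Ico k (m + 1),
        Tendsto (fun t => t ^ (j - k) * inPart F j (u t)) l
          (𝓝 ((0:ℝ) ^ (j - k) * inPart F j w)) := by
      intro j hj
      apply Tendsto.mul
      · exact ((continuous_pow (j - k)).tendsto 0).mono_left nhdsWithin_le_nhds
      · exact ((inPart_contDiff F j).continuous.tendsto w).comp hc
    have hsum := tendsto_finset_sum (Finset.Ico k (m+1)) hterm
    have hfirst : Tendsto (fun t => t ^ (m - k) * E t) l (𝓝 ((0:ℝ) ^ (m-k) * 0)) :=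
      Tendsto.mul (((continuous_pow (m - k)).tendsto 0).mono_left nhdsWithin_le_nhds) hEten
    have := hfirst.add hsum
    have heval : (0:ℝ) ^ (m-k) * 0 + ∑ j ∈ Finset.Ico k (m+1),
        (0:ℝ) ^ (j - k) * inPart F j w = inPart F k w := by
      rw [mul_zero, zero_add]
      rw [Finset.sum_eq_single_of_mem k (Finset.mem_Ico.mpr ⟨le_rfl, by omega⟩)]
      · simp
      · intro j hj hne
        rw [Finset.mem_Ico] at hj
        rw [zero_pow (by omega : j - k ≠ 0), zero_mul]
    rwa [heval] at this
  exact hR.congr' (by filter_upwards [hiden] with t ht; rw [ht])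

lemma vanish {n m : ℕ} {F : Eucl n → ℝ} (hF : ContDiff ℝ (⊤ : ℕ∞) F)
    {c : Eucl n → ℝ → Eucl n} {A : Eucl n → Eucl n} (hA : Function.Surjective A)
    (hc : ∀ v, Tendsto (fun t => t⁻¹ • c v t) (𝓝[>] (0:ℝ)) (𝓝 (A v)))
    (hlim : ∀ v, ∃ L, Tendsto (fun t => ((t:ℝ) ^ m)⁻¹ * F (c v t)) (𝓝[>] (0:ℝ)) (𝓝 L)) :
    ∀ j, j < m → ∀ y : Eucl n, inPart F j y = 0 := by
  suffices H : ∀ k, k ≤ m → ∀ j, j < k → ∀ y : Eucl n, inPart F j y = 0 from H m le_rfl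
  intro k
  induction k with
  | zero => intro _ j hj; omega
  | succ k IH =>
    intro hk j hj y
    rcases Nat.lt_or_ge j k with hjk | hjk
    · exact IH (by omega) j hjk y
    have hjeq : j = k := by omega
    subst hjeq
    obtain ⟨v, rfl⟩ := hA y
    have h1 := key hF (hc v) (by omega : j ≤ m) (IH (by omega))
    obtain ⟨L, hL⟩ := hlim v
    have h2 : Tendsto (fun t => t ^ (m - j) * ((t ^ m)⁻¹ * F (c v t))) (𝓝[>] (0:ℝ))
        (𝓝 ((0:ℝ) ^ (m - j) * L)) :=
      Tendsto.mul (((continuous_pow (m - j)).tendsto 0).mono_left nhdsWithin_le_nhds) hL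
    rw [zero_pow (by omega : m - j ≠ 0), zero_mul] at h2
    exact tendsto_nhds_unique h1 h2

lemma limit_top {n m : ℕ} {F : Eucl n → ℝ} (hF : ContDiff ℝ (⊤ : ℕ∞) F)
    {c : ℝ → Eucl n} {w : Eucl n}
    (hc : Tendsto (fun t => t⁻¹ • c t) (𝓝[>] (0:ℝ)) (𝓝 w))
    (hvan : ∀ j, j < m → ∀ y : Eucl n, inPart F j y = 0) :
    Tendsto (fun t => ((t:ℝ) ^ m)⁻¹ * F (c t)) (𝓝[>] (0:ℝ)) (𝓝 (inPart F m w)) := by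
  have := key hF hc le_rfl hvan
  simpa using this

lemma straight_curve {n : ℕ} (v : Eucl n) :
    Tendsto (fun t : ℝ => t⁻¹ • (t • v)) (𝓝[>] (0:ℝ)) (𝓝 v) := by
  apply tendsto_const_nhds.congr'
  filter_upwards [self_mem_nhdsWithin] with t (ht : 0 < t)
  rw [inv_smul_smul₀ (ne_of_gt ht)]

lemma curve_tendsto_zero {n : ℕ} (v : Eucl n) :
    Tendsto (fun t : ℝ => t • v) (𝓝[>] (0:ℝ)) (𝓝 0) := by
  have : Tendsto (fun t : ℝ => t • v) (𝓝 0) (𝓝 ((0:ℝ) • v)) :=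
    (continuous_id.smul continuous_const).tendsto 0
  simpa using this.mono_left nhdsWithin_le_nhds

lemma deriv_curve {n : ℕ} {φ : Eucl n → Eucl n} {A : Eucl n →L[ℝ] Eucl n}
    (hφ : HasFDerivAt φ A 0) (hφ0 : φ 0 = 0) (v : Eucl n) :
    Tendsto (fun t : ℝ => t⁻¹ • φ (t • v)) (𝓝[>] (0:ℝ)) (𝓝 (A v)) := by
  have hlo := hφ.isLittleO
  have ho := hlo.comp_tendsto (curve_tendsto_zero v)
  rw [Metric.tendsto_nhds]
  intro ε hε
  have hc : (0:ℝ) < ε / (2 * (‖v‖ + 1)) := by positivity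
  have hev := (Asymptotics.isLittleO_iff.mp ho) hc
  filter_upwards [self_mem_nhdsWithin, hev] with t (ht : 0 < t) hb
  simp only [Function.comp_apply, hφ0, sub_zero, smul_zero] at hb
  rw [map_smul] at hb
  have heq : dist (t⁻¹ • φ (t • v)) (A v) = t⁻¹ * ‖φ (t • v) - t • A v‖ := by
    rw [dist_eq_norm]
    have : t⁻¹ • φ (t • v) - A v = t⁻¹ • (φ (t • v) - t • A v) := by
      rw [smul_sub, smul_smul, inv_mul_cancel₀ (ne_of_gt ht), one_smul]
    rw [this, norm_smul, Real.norm_eq_abs, abs_of_pos (inv_pos.mpr ht)]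
  rw [heq]
  have hb' : ‖φ (t • v) - t • A v‖ ≤ ε / (2 * (‖v‖ + 1)) * (t * ‖v‖) := by
    calc ‖φ (t • v) - t • A v‖ ≤ ε / (2 * (‖v‖ + 1)) * ‖t • v‖ := hb
      _ = ε / (2 * (‖v‖ + 1)) * (t * ‖v‖) := by
          rw [norm_smul, Real.norm_eq_abs, abs_of_pos ht]
  calc t⁻¹ * ‖φ (t • v) - t • A v‖ ≤ t⁻¹ * (ε / (2 * (‖v‖ + 1)) * (t * ‖v‖)) := by
        apply mul_le_mul_of_nonneg_left hb' (le_of_lt (inv_pos.mpr ht))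
    _ = ε * (‖v‖ / (‖v‖ + 1)) / 2 := by field_simp
    _ < ε := by
        have h1 : ‖v‖ / (‖v‖ + 1) < 1 := by
          rw [div_lt_one (by positivity)]; linarith [norm_nonneg v]
        nlinarith [norm_nonneg v, hε]

-- ### Algebraic part: invariance of the Milnor number under linear changes ---

lemma germ_algebraMap_eq {n : ℕ} (r : ℝ) :
    (algebraMap ℝ (Filter.Germ (𝓝 (0 : Eucl n)) ℝ) r)
      = (↑(fun _ : Eucl n => r) : Filter.Germ _ ℝ) := by
  rw [Algebra.algebraMap_eq_smul_one, ← Filter.Germ.coe_one, ← Filter.Germ.coe_smul]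
  congr 1
  funext x
  simp

/-- Composition with a map tending to `0` as algebra hom on germs. -/
def germComp {n : ℕ} (e : Eucl n → Eucl n) (h : Tendsto e (𝓝 0) (𝓝 0)) :
    Filter.Germ (𝓝 (0 : Eucl n)) ℝ →ₐ[ℝ] Filter.Germ (𝓝 (0 : Eucl n)) ℝ where
  toFun γ := γ.compTendsto e h
  map_one' := by
    change ((↑(1 : Eucl n → ℝ) : Filter.Germ (𝓝 (0 : Eucl n)) ℝ)).compTendsto e h = 1
    rw [Filter.Germ.coe_compTendsto]
    rfl
  map_mul' γ δ := Filter.Germ.inductionOn₂ γ δ fun a b => by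
    change ((↑(a * b) : Filter.Germ (𝓝 (0 : Eucl n)) ℝ)).compTendsto e h = _ * _
    rw [Filter.Germ.coe_compTendsto]
    change _ = ((↑a : Filter.Germ (𝓝 (0 : Eucl n)) ℝ)).compTendsto e h *
      ((↑b : Filter.Germ (𝓝 (0 : Eucl n)) ℝ)).compTendsto e h
    rw [Filter.Germ.coe_compTendsto, Filter.Germ.coe_compTendsto, ← Filter.Germ.coe_mul]
    rfl
  map_zero' := by
    change ((↑(0 : Eucl n → ℝ) : Filter.Germ (𝓝 (0 : Eucl n)) ℝ)).compTendsto e h = 0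
    rw [Filter.Germ.coe_compTendsto]
    rfl
  map_add' γ δ := Filter.Germ.inductionOn₂ γ δ fun a b => by
    change ((↑(a + b) : Filter.Germ (𝓝 (0 : Eucl n)) ℝ)).compTendsto e h = _ + _
    rw [Filter.Germ.coe_compTendsto]
    change _ = ((↑a : Filter.Germ (𝓝 (0 : Eucl n)) ℝ)).compTendsto e h +
      ((↑b : Filter.Germ (𝓝 (0 : Eucl n)) ℝ)).compTendsto e h
    rw [Filter.Germ.coe_compTendsto, Filter.Germ.coe_compTendsto, ← Filter.Germ.coe_add]
    rfl
  commutes' r := by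
    change ((algebraMap ℝ (Filter.Germ (𝓝 (0 : Eucl n)) ℝ) r)).compTendsto e h = _
    rw [germ_algebraMap_eq, Filter.Germ.coe_compTendsto]
    rfl

lemma contDiff_top_CLE {n : ℕ} (e : Eucl n ≃L[ℝ] Eucl n) : ContDiff ℝ (⊤ : ℕ∞) ⇑e := by
  have := (e : Eucl n →L[ℝ] Eucl n).contDiff (n := (⊤ : ℕ∞))
  simpa using this

lemma tendsto_CLE {n : ℕ} (e : Eucl n ≃L[ℝ] Eucl n) :
    Tendsto ⇑e (𝓝 (0 : Eucl n)) (𝓝 0) :=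
  e.continuous.tendsto' 0 0 (map_zero e)

/-- Composition algebra hom on smooth germs. -/
def smoothComp {n : ℕ} (e : Eucl n → Eucl n) (h : Tendsto e (𝓝 0) (𝓝 0))
    (he : ContDiff ℝ (⊤ : ℕ∞) e) : smoothGerms n →ₐ[ℝ] smoothGerms n :=
  AlgHom.codRestrict ((germComp e h).comp (smoothGerms n).val) (smoothGerms n)
    (by
      rintro ⟨γ, F, hF, rfl⟩
      exact ⟨F ∘ e, hF.comp he, (Filter.Germ.coe_compTendsto F h).symm⟩)

lemma compTendsto_inverse {n : ℕ} {a b : Eucl n → Eucl n}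
    (ha : Tendsto a (𝓝 (0:Eucl n)) (𝓝 0)) (hb : Tendsto b (𝓝 (0:Eucl n)) (𝓝 0))
    (hab : ∀ x, a (b x) = x) (γ : Filter.Germ (𝓝 (0 : Eucl n)) ℝ) :
    ((γ.compTendsto a ha).compTendsto b hb) = γ :=
  Filter.Germ.inductionOn γ fun F => by
    rw [Filter.Germ.coe_compTendsto, Filter.Germ.coe_compTendsto]
    congr 1
    funext x
    simp [Function.comp, hab x]

/-- Composition with a continuous linear equivalence as an algebra automorphism
of smooth germs. -/
def smoothCompEquiv {n : ℕ} (e : Eucl n ≃L[ℝ] Eucl n) :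
    smoothGerms n ≃ₐ[ℝ] smoothGerms n :=
  AlgEquiv.ofAlgHom (smoothComp ⇑e (tendsto_CLE e) (contDiff_top_CLE e))
    (smoothComp ⇑e.symm (tendsto_CLE e.symm) (contDiff_top_CLE e.symm))
    (AlgHom.ext fun _ => Subtype.ext
      (compTendsto_inverse (tendsto_CLE e.symm) (tendsto_CLE e)
        (fun x => e.symm_apply_apply x) _))
    (AlgHom.ext fun _ => Subtype.ext
      (compTendsto_inverse (tendsto_CLE e) (tendsto_CLE e.symm)
        (fun x => e.apply_symm_apply x) _))

lemma eucl_sum_single {n : ℕ} (y : Eucl n) :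
    ∑ j : Fin n, y j • EuclideanSpace.single j (1:ℝ) = y := by
  have := (EuclideanSpace.basisFun (Fin n) ℝ).sum_repr y
  simpa [EuclideanSpace.basisFun_apply, EuclideanSpace.basisFun_repr] using this

lemma fderiv_comp_single {n : ℕ} {Q : Eucl n → ℝ} (hQ : ContDiff ℝ (⊤ : ℕ∞) Q)
    (e : Eucl n ≃L[ℝ] Eucl n) (x : Eucl n) (v : Eucl n) :
    fderiv ℝ (Q ∘ ⇑e) x v = fderiv ℝ Q (e x) (e v) := by
  rw [fderiv_comp x (hQ.differentiable (by simp) (e x)) e.differentiableAt]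
  rw [e.fderiv]
  rfl

lemma deriv_expand {n : ℕ} {Q : Eucl n → ℝ} (hQ : ContDiff ℝ (⊤ : ℕ∞) Q)
    (e : Eucl n ≃L[ℝ] Eucl n) (x : Eucl n) (i : Fin n) :
    fderiv ℝ (Q ∘ ⇑e) x (EuclideanSpace.single i 1)
      = ∑ j : Fin n, (e (EuclideanSpace.single i 1)) j *
          fderiv ℝ Q (e x) (EuclideanSpace.single j 1) := by
  rw [fderiv_comp_single hQ e x]
  conv_lhs => rw [← eucl_sum_single (e (EuclideanSpace.single i 1))]
  rw [map_sum]
  simp [smul_eq_mul]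

lemma deriv_expand' {n : ℕ} {Q : Eucl n → ℝ} (hQ : ContDiff ℝ (⊤ : ℕ∞) Q)
    (e : Eucl n ≃L[ℝ] Eucl n) (x : Eucl n) (j : Fin n) :
    fderiv ℝ Q (e x) (EuclideanSpace.single j 1)
      = ∑ i : Fin n, (e.symm (EuclideanSpace.single j 1)) i *
          fderiv ℝ (Q ∘ ⇑e) x (EuclideanSpace.single i 1) := by
  have h1 : fderiv ℝ Q (e x) (EuclideanSpace.single j 1)
      = fderiv ℝ (Q ∘ ⇑e) x (e.symm (EuclideanSpace.single j 1)) := by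
    rw [fderiv_comp_single hQ e x (e.symm (EuclideanSpace.single j 1)), e.apply_symm_apply]
  rw [h1]
  conv_lhs => rw [← eucl_sum_single (e.symm (EuclideanSpace.single j 1))]
  rw [map_sum]
  simp [smul_eq_mul]

lemma jacobianIdeal_comp {n : ℕ} (Q : Eucl n → ℝ) (hQ : ContDiff ℝ (⊤ : ℕ∞) Q)
    (e : Eucl n ≃L[ℝ] Eucl n) :
    jacobianIdeal n (Q ∘ ⇑e) =
      Ideal.map ((smoothCompEquiv e : smoothGerms n ≃ₐ[ℝ] smoothGerms n) :
        smoothGerms n →+* smoothGerms n) (jacobianIdeal n Q) := by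
  have hQe : ContDiff ℝ (⊤ : ℕ∞) (Q ∘ ⇑e) := hQ.comp (contDiff_top_CLE e)
  have hQd : ∀ j : Fin n, ContDiff ℝ (⊤ : ℕ∞) fun x => fderiv ℝ Q x (EuclideanSpace.single j 1) :=
    fun j => (hQ.fderiv_right (by simp)).clm_apply contDiff_const
  have hQed : ∀ i : Fin n, ContDiff ℝ (⊤ : ℕ∞) fun x => fderiv ℝ (Q ∘ ⇑e) x (EuclideanSpace.single i 1) :=
    fun i => (hQe.fderiv_right (by simp)).clm_apply contDiff_const
  set Φ : smoothGerms n →+* smoothGerms n :=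
    ((smoothCompEquiv e : smoothGerms n ≃ₐ[ℝ] smoothGerms n) :
      smoothGerms n →+* smoothGerms n) with hΦ
  set genQ : Fin n → smoothGerms n := fun j =>
    ⟨↑(fun x => fderiv ℝ Q x (EuclideanSpace.single j 1)), _, hQd j, rfl⟩ with hgenQ
  set genQe : Fin n → smoothGerms n := fun i =>
    ⟨↑(fun x => fderiv ℝ (Q ∘ ⇑e) x (EuclideanSpace.single i 1)), _, hQed i, rfl⟩ with hgenQe
  have hgenQmem : ∀ j, genQ j ∈ jacobianIdeal n Q :=
    fun j => Ideal.subset_span ⟨j, rfl⟩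
  have hgenQemem : ∀ i, genQe i ∈ jacobianIdeal n (Q ∘ ⇑e) :=
    fun i => Ideal.subset_span ⟨i, rfl⟩
  apply le_antisymm
  · apply Ideal.span_le.mpr
    rintro γ ⟨i, hi⟩
    have hγ : γ = ∑ j : Fin n, algebraMap ℝ (smoothGerms n) ((e (EuclideanSpace.single i 1)) j)
        * Φ (genQ j) := by
      apply Subtype.ext
      rw [hi]
      have hval : ∀ j, ((Φ (genQ j) : smoothGerms n) : Filter.Germ (𝓝 (0 : Eucl n)) ℝ)
          = ↑((fun x => fderiv ℝ Q x (EuclideanSpace.single j 1)) ∘ ⇑e) := by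
        intro j
        rw [show ((Φ (genQ j) : smoothGerms n) : Filter.Germ (𝓝 (0 : Eucl n)) ℝ)
          = ((genQ j : smoothGerms n) : Filter.Germ (𝓝 (0:Eucl n)) ℝ).compTendsto ⇑e
            (tendsto_CLE e) from rfl]
        rw [hgenQ, Filter.Germ.coe_compTendsto]
      have hfun : (fun x => fderiv ℝ (Q ∘ ⇑e) x (EuclideanSpace.single i 1))
          = ∑ j : Fin n, (fun _ : Eucl n => (e (EuclideanSpace.single i 1)) j) *
              ((fun x => fderiv ℝ Q x (EuclideanSpace.single j 1)) ∘ ⇑e) := by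
        funext x
        rw [Finset.sum_apply]
        simp only [Pi.mul_apply, Function.comp_apply]
        exact deriv_expand hQ e x i
      rw [AddSubmonoidClass.coe_finset_sum]
      simp only [MulMemClass.coe_mul, Subalgebra.coe_algebraMap, hval, germ_algebraMap_eq]
      rw [hfun]
      rw [show ((↑(∑ j : Fin n, (fun _ : Eucl n => (e (EuclideanSpace.single i 1)) j) *
          ((fun x => fderiv ℝ Q x (EuclideanSpace.single j 1)) ∘ ⇑e)) :
          Filter.Germ (𝓝 (0 : Eucl n)) ℝ)) = ∑ j : Fin n,
          (↑((fun _ : Eucl n => (e (EuclideanSpace.single i 1)) j) *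
          ((fun x => fderiv ℝ Q x (EuclideanSpace.single j 1)) ∘ ⇑e)) :
          Filter.Germ (𝓝 (0 : Eucl n)) ℝ) from
        map_sum (Filter.Germ.coeRingHom _) _ _]
      apply Finset.sum_congr rfl
      intro j _
      rw [← Filter.Germ.coe_mul]
    rw [hγ]
    exact Ideal.sum_mem _ fun j _ => Ideal.mul_mem_left _ _
      (Ideal.mem_map_of_mem Φ (hgenQmem j))
  · apply Ideal.map_le_iff_le_comap.mpr
    apply Ideal.span_le.mpr
    rintro γ ⟨j, hj⟩
    show Φ γ ∈ jacobianIdeal n (Q ∘ ⇑e)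
    have hγ : Φ γ = ∑ i : Fin n,
        algebraMap ℝ (smoothGerms n) ((e.symm (EuclideanSpace.single j 1)) i) * genQe i := by
      apply Subtype.ext
      have hΦval : ((Φ γ : smoothGerms n) : Filter.Germ (𝓝 (0 : Eucl n)) ℝ)
          = ↑((fun x => fderiv ℝ Q x (EuclideanSpace.single j 1)) ∘ ⇑e) := by
        rw [show ((Φ γ : smoothGerms n) : Filter.Germ (𝓝 (0 : Eucl n)) ℝ)
          = ((γ : smoothGerms n) : Filter.Germ (𝓝 (0:Eucl n)) ℝ).compTendsto ⇑e
            (tendsto_CLE e) from rfl]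
        rw [hj, Filter.Germ.coe_compTendsto]
      rw [hΦval]
      have hfun : ((fun x => fderiv ℝ Q x (EuclideanSpace.single j 1)) ∘ ⇑e)
          = ∑ i : Fin n, (fun _ : Eucl n => (e.symm (EuclideanSpace.single j 1)) i) *
              (fun x => fderiv ℝ (Q ∘ ⇑e) x (EuclideanSpace.single i 1)) := by
        funext x
        rw [Finset.sum_apply]
        simp only [Pi.mul_apply, Function.comp_apply]
        exact deriv_expand' hQ e x j
      rw [AddSubmonoidClass.coe_finset_sum]
      simp only [MulMemClass.coe_mul, Subalgebra.coe_algebraMap, germ_algebraMap_eq, hgenQe]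
      rw [hfun]
      rw [show ((↑(∑ i : Fin n, (fun _ : Eucl n => (e.symm (EuclideanSpace.single j 1)) i) *
          (fun x => fderiv ℝ (Q ∘ ⇑e) x (EuclideanSpace.single i 1))) :
          Filter.Germ (𝓝 (0 : Eucl n)) ℝ)) = ∑ i : Fin n,
          (↑((fun _ : Eucl n => (e.symm (EuclideanSpace.single j 1)) i) *
          (fun x => fderiv ℝ (Q ∘ ⇑e) x (EuclideanSpace.single i 1))) :
          Filter.Germ (𝓝 (0 : Eucl n)) ℝ) from
        map_sum (Filter.Germ.coeRingHom _) _ _]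
      apply Finset.sum_congr rfl
      intro i _
      rw [← Filter.Germ.coe_mul]
    rw [hγ]
    exact Ideal.sum_mem _ fun i _ => Ideal.mul_mem_left _ _ (hgenQemem i)

lemma milnor_comp {n : ℕ} (Q : Eucl n → ℝ) (hQ : ContDiff ℝ (⊤ : ℕ∞) Q) (e : Eucl n ≃L[ℝ] Eucl n) :
    milnor n (Q ∘ ⇑e) = milnor n Q := by
  have hJ := jacobianIdeal_comp Q hQ e
  have E := Ideal.quotientEquivAlg (jacobianIdeal n Q) (jacobianIdeal n (Q ∘ ⇑e))
    (smoothCompEquiv e) hJ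
  exact (E.toLinearEquiv.rank_eq).symm

end Aux

/-- if `f = g ∘ φ` for a germ of `C^1` diffeomorphism
`φ : (ℝ^n, 0) → (ℝ^n, 0)` and `f` has finite order `m`, then `g` also has order `m` at `0`
and `in(f) = in(g) ∘ D_0 φ`; in particular `μ(in(f)) < ∞ ↔ μ(in(g)) < ∞`. -/
theorem initialPart_comp_deriv_of_C1_equiv {n : ℕ} (f g : Eucl n → ℝ)
    (hf : ContDiff ℝ (⊤ : ℕ∞) f) (hg : ContDiff ℝ (⊤ : ℕ∞) g)
    (hf0 : f 0 = 0) (hg0 : g 0 = 0)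
    (φ : Eucl n → Eucl n) (hφ : IsCkDiffeoGermAt 1 φ)
    (heq : ∀ᶠ x in 𝓝 (0 : Eucl n), f x = g (φ x))
    (m : ℕ) (hord : HasOrderAt f 0 (m : ℝ)) :
    HasOrderAt g 0 (m : ℝ) ∧
      (∀ x : Eucl n, inPart f m x = inPart g m (fderiv ℝ φ 0 x)) ∧
      (milnor n (inPart f m) < Cardinal.aleph0 ↔
        milnor n (inPart g m) < Cardinal.aleph0) := by
  classical
  set l := 𝓝[>] (0:ℝ) with hl
  obtain ⟨hφ0, U, Vs, hU, hVs, hUmem, hVsmem, hbij, hφC1, ψ, hψC1, hψφ, hφψ⟩ := hφ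
  have hφd : DifferentiableAt ℝ φ 0 :=
    (hφC1.contDiffAt (hU.mem_nhds hUmem)).differentiableAt (by simp)
  have hψ0 : ψ 0 = 0 := by
    have := hψφ 0 hUmem
    rwa [hφ0] at this
  have hψd : DifferentiableAt ℝ ψ 0 :=
    (hψC1.contDiffAt (hVs.mem_nhds hVsmem)).differentiableAt (by simp)
  set A := fderiv ℝ φ 0 with hA
  set B := fderiv ℝ ψ 0 with hB
  have hBA : Function.LeftInverse ⇑B ⇑A := by
    have hev : ψ ∘ φ =ᶠ[𝓝 (0:Eucl n)] id := by
      filter_upwards [hU.mem_nhds hUmem] with x hx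
      exact hψφ x hx
    have h1 : fderiv ℝ (ψ ∘ φ) 0 = B.comp A := by
      rw [fderiv_comp 0 (by rw [hφ0]; exact hψd) hφd, hφ0]
    have h2 : fderiv ℝ (ψ ∘ φ) 0 = ContinuousLinearMap.id ℝ (Eucl n) := by
      rw [hev.fderiv_eq, fderiv_id]
    intro x
    have h3 := h1.symm.trans h2
    have := DFunLike.congr_fun h3 x
    simpa using this
  have hAB : Function.RightInverse ⇑B ⇑A := by
    have hev : φ ∘ ψ =ᶠ[𝓝 (0:Eucl n)] id := by
      filter_upwards [hVs.mem_nhds hVsmem] with y hy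
      exact hφψ y hy
    have h1 : fderiv ℝ (φ ∘ ψ) 0 = A.comp B := by
      rw [fderiv_comp 0 (by rw [hψ0]; exact hφd) hψd, hψ0]
    have h2 : fderiv ℝ (φ ∘ ψ) 0 = ContinuousLinearMap.id ℝ (Eucl n) := by
      rw [hev.fderiv_eq, fderiv_id]
    intro x
    have h3 := h1.symm.trans h2
    have := DFunLike.congr_fun h3 x
    simpa using this
  set e : Eucl n ≃L[ℝ] Eucl n := ContinuousLinearEquiv.equivOfInverse A B hBA hAB with he
  have heA : ∀ x, e x = A x := fun x => rfl
  have hconv : ∀ (F : Eucl n → ℝ) (v : Eucl n),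
      (fun t : ℝ => (t ^ (m:ℝ))⁻¹ • F (0 + t • v)) = fun t : ℝ => ((t:ℝ)^m)⁻¹ * F (t • v) := by
    intro F v
    funext t
    rw [Real.rpow_natCast]
    simp [smul_eq_mul]
  have heqt : ∀ v : Eucl n, ∀ᶠ t in l, f (t • v) = g (φ (t • v)) :=
    fun v => (curve_tendsto_zero v).eventually heq
  -- f-side
  have hcf : ∀ v : Eucl n, Tendsto (fun t : ℝ => t⁻¹ • (fun w : Eucl n => fun s : ℝ => s • w) v t)
      l (𝓝 (id v)) := fun v => straight_curve v
  have hlimf : ∀ v : Eucl n, ∃ L, Tendsto (fun t : ℝ => ((t:ℝ)^m)⁻¹ * f (t • v)) l (𝓝 L) := by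
    intro v
    by_cases hv : v = 0
    · refine ⟨0, ?_⟩
      have : (fun t : ℝ => ((t:ℝ)^m)⁻¹ * f (t • v)) = fun _ => 0 := by
        funext t
        rw [hv, smul_zero, hf0, mul_zero]
      rw [this]
      exact tendsto_const_nhds
    · obtain ⟨L, hL⟩ := hord.1 v hv
      rw [hconv f v] at hL
      exact ⟨L, hL⟩
  have hvf : ∀ j, j < m → ∀ y : Eucl n, inPart f j y = 0 :=
    vanish hf Function.surjective_id hcf hlimf
  have hlimf' : ∀ v : Eucl n, Tendsto (fun t : ℝ => ((t:ℝ)^m)⁻¹ * f (t • v)) l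
      (𝓝 (inPart f m v)) := fun v => limit_top hf (straight_curve v) hvf
  -- g-side
  have hcg : ∀ v : Eucl n,
      Tendsto (fun t : ℝ => t⁻¹ • (fun w : Eucl n => fun s : ℝ => φ (s • w)) v t) l (𝓝 (e v)) := by
    intro v
    have := deriv_curve (A := A) hφd.hasFDerivAt hφ0 v
    rw [← heA v] at this
    exact this
  have hlimg : ∀ v : Eucl n, ∃ L, Tendsto (fun t : ℝ => ((t:ℝ)^m)⁻¹ * g (φ (t • v))) l (𝓝 L) := by
    intro v
    by_cases hv : v = 0
    · refine ⟨0, ?_⟩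
      have : (fun t : ℝ => ((t:ℝ)^m)⁻¹ * g (φ (t • v))) = fun _ => 0 := by
        funext t
        rw [hv, smul_zero, hφ0, hg0, mul_zero]
      rw [this]
      exact tendsto_const_nhds
    · obtain ⟨L, hL⟩ := hord.1 v hv
      rw [hconv f v] at hL
      refine ⟨L, hL.congr' ?_⟩
      filter_upwards [heqt v] with t ht
      rw [ht]
  have hvg : ∀ j, j < m → ∀ y : Eucl n, inPart g j y = 0 :=
    vanish hg e.surjective hcg hlimg
  have hlimg' : ∀ v : Eucl n, Tendsto (fun t : ℝ => ((t:ℝ)^m)⁻¹ * g (φ (t • v))) l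
      (𝓝 (inPart g m (e v))) := fun v => limit_top hg (hcg v) hvg
  have hlimgs : ∀ w : Eucl n, Tendsto (fun t : ℝ => ((t:ℝ)^m)⁻¹ * g (t • w)) l
      (𝓝 (inPart g m w)) := fun w => limit_top hg (straight_curve w) hvg
  -- the identity between initial parts
  have hid : ∀ v : Eucl n, inPart f m v = inPart g m (e v) := by
    intro v
    refine tendsto_nhds_unique (hlimf' v) ((hlimg' v).congr' ?_)
    filter_upwards [heqt v] with t ht
    rw [← ht]
  refine ⟨⟨?_, ?_⟩, ?_, ?_⟩
  · intro w _
    refine ⟨inPart g m w, ?_⟩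
    rw [hconv g w]
    exact hlimgs w
  · obtain ⟨v₀, hv₀, L₀, hL₀ne, hL₀⟩ := hord.2
    rw [hconv f v₀] at hL₀
    have hLeq : L₀ = inPart f m v₀ := tendsto_nhds_unique hL₀ (hlimf' v₀)
    refine ⟨e v₀, ?_, L₀, hL₀ne, ?_⟩
    · intro h0
      apply hv₀
      have : e v₀ = e 0 := by simpa using h0
      exact e.injective this
    · rw [hconv g (e v₀), hLeq, hid v₀]
      exact hlimgs (e v₀)
  · intro x
    rw [hid x]
    rfl
  · have hP : inPart f m = (inPart g m) ∘ ⇑e := funext fun v => hid v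
    rw [hP, milnor_comp (inPart g m) (inPart_contDiff g m) e]
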